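/- Let σ: Π → Γ be a strong formal subdivision of rank 0 between lower Eulerian posets, where Γ is a lower order ideal in an Eulerian poset B. Then the extension Π̃ of Π over B is lower Eulerian and the extension σ̃: Π̃ → B of σ is a strong formal subdivision. Moreover, if Γ ⊊ B then Π̃ is Eulerian. -/

import Mathlib

open scoped Classical

noncomputable section

namespace CDIndex

variable {α β : Type}

/-- The natural rank function of a graded poset: `rho x` is one less than the largest
cardinality of a chain contained in `Set.Iic x` (i.e. the length of a maximal chain of
the interval `[0̂, x]`). -/
def rho [PartialOrder α] (x : α) : ℕ :=
  sSup {k : ℕ | ∃ s : Finset α,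
    IsChain (· ≤ ·) (s : Set α) ∧ (s : Set α) ⊆ Set.Iic x ∧ s.card = k + 1}

/-- A subset `S` of a poset is graded of rank `n` if every maximal chain of `S`
has exactly `n + 1` elements (i.e. length `n`). -/
def IsGradedSetOfRank [PartialOrder α] (S : Set α) (n : ℕ) : Prop :=
  ∀ s : Finset α, (s : Set α) ⊆ S → IsChain (· ≤ ·) (s : Set α) →
    (∀ t : Finset α, (t : Set α) ⊆ S → IsChain (· ≤ ·) (t : Set α) → s ⊆ t → s = t) →
    s.card = n + 1

/-- A poset is graded of rank `n` if every maximal chain has length `n`. -/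
def IsGradedOfRank (α : Type) [PartialOrder α] (n : ℕ) : Prop :=
  IsGradedSetOfRank (Set.univ : Set α) n

/-- Every interval `[s, t]` with `s < t`, `s, t ∈ S`, has equally many elements of even
rank and of odd rank. -/
def BalancedIntervalsIn [PartialOrder α] (S : Set α) : Prop :=
  ∀ s ∈ S, ∀ t ∈ S, s < t →
    {y ∈ Set.Icc s t | Even (rho y)}.ncard = {y ∈ Set.Icc s t | Odd (rho y)}.ncard

/-- An Eulerian poset of rank `n`: a graded poset with `0̂` and `1̂` in which every
interval of positive length has equally many elements of each parity of rank. -/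
def IsEulerianOfRank (α : Type) [PartialOrder α] (n : ℕ) : Prop :=
  (∃ b : α, ∀ z, b ≤ z) ∧ (∃ t : α, ∀ z, z ≤ t) ∧
    IsGradedOfRank α n ∧ BalancedIntervalsIn (Set.univ : Set α)

/-- A lower Eulerian poset of rank `n`: a graded poset with `0̂` all of whose intervals
are Eulerian. -/
def IsLowerEulerianOfRank (α : Type) [PartialOrder α] (n : ℕ) : Prop :=
  (∃ b : α, ∀ z, b ≤ z) ∧ IsGradedOfRank α n ∧ BalancedIntervalsIn (Set.univ : Set α)

/-- A lower order ideal `S` (of a poset) which is lower Eulerian of rank `n`. -/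
def IsLowerEulerianSetOfRank [PartialOrder α] (S : Set α) (n : ℕ) : Prop :=
  IsGradedSetOfRank S n ∧ BalancedIntervalsIn S

/-- The boundary of (a lower order ideal `S` of) a graded poset of rank `n`: the lower
order ideal generated by the rank `n - 1` elements which are covered by exactly one
element. -/
def boundaryIn [PartialOrder α] (S : Set α) (n : ℕ) : Set α :=
  {y | y ∈ S ∧ ∃ x ∈ S, rho x = n - 1 ∧ {z ∈ S | x ⋖ z}.ncard = 1 ∧ y ≤ x}

/-- The boundary `∂P` of a graded poset of rank `n`. -/
def boundary (α : Type) [PartialOrder α] (n : ℕ) : Set α :=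
  boundaryIn (Set.univ : Set α) n

/-- `α` is a near-Eulerian poset of rank `n`: it is obtained from an Eulerian poset `Q`
of rank `n + 1` by removing the maximal element and one element `q` of rank `n`. -/
def IsNearEulerianOfRank (α : Type) [PartialOrder α] [Finite α] (n : ℕ) : Prop :=
  ∃ (Q : Type) (_ : PartialOrder Q) (_ : Finite Q) (q top : Q),
    IsEulerianOfRank Q (n + 1) ∧ (∀ z, z ≤ top) ∧ rho q = n ∧ q ≠ top ∧
    Nonempty (α ≃o {x : Q // x ≠ q ∧ x ≠ top})

/-- `α` is (isomorphic to) the boundary of an Eulerian poset, where `α` has rank `n`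
(so the Eulerian poset has rank `n + 1`). -/
def IsBoundaryOfEulerianOfRank (α : Type) [PartialOrder α] [Finite α] (n : ℕ) : Prop :=
  ∃ (Q : Type) (_ : PartialOrder Q) (_ : Finite Q) (top : Q),
    IsEulerianOfRank Q (n + 1) ∧ (∀ z, z ≤ top) ∧
    Nonempty (α ≃o {x : Q // x ≠ top})

/-! ### Strong formal subdivisions -/

/-- A strong formal subdivision (of rank `0`, with the natural rank functions): an
order-preserving, rank-increasing, surjective map which is strongly surjective and
satisfies the alternating-sum condition on fibers. -/
def IsSFS {α β : Type} [PartialOrder α] [PartialOrder β] (φ : α → β) : Prop :=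
  Monotone φ ∧ (∀ y, rho y ≤ rho (φ y)) ∧ Function.Surjective φ ∧
  (∀ y x, φ y ≤ x → ∃ y', y ≤ y' ∧ φ y' = x ∧ rho y' = rho x) ∧
  (∀ y x, φ y ≤ x →
    (∑ᶠ y' ∈ {y' | φ y' = x ∧ y ≤ y'}, ((-1 : ℤ) ^ rho y')) = (-1) ^ rho x)

/-! ### Extensions of posets and poset maps -/

/-- The extension `Π̃ = Π ∪ (B ∖ Γ)` of a poset `Π` over `B`, along a map
`σ : Π → B` whose image is the lower order ideal `Γ = G ⊆ B`.  Elements are either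
elements of `Π` (`Sum.inl`) or elements of `B ∖ G` (`Sum.inr`). -/
@[ext] structure ExtP {α β : Type} (σ : α → β) (G : Set β) : Type where
  elt : α ⊕ {x : β // x ∉ G}

namespace ExtP

variable {σ : α → β} {G : Set β}

instance instPartialOrder [PartialOrder α] [PartialOrder β] : PartialOrder (ExtP σ G) where
  le p q := match p, q with
    | ⟨.inl y⟩, ⟨.inl y'⟩ => y ≤ y'
    | ⟨.inl y⟩, ⟨.inr x⟩ => ∃ y', y ≤ y' ∧ σ y' ≤ (x : β)
    | ⟨.inr _⟩, ⟨.inl _⟩ => False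
    | ⟨.inr x⟩, ⟨.inr x'⟩ => x ≤ x'
  le_refl p := by
    rcases p with ⟨y | x⟩
    · exact (le_refl y : y ≤ y)
    · exact (le_refl x : x ≤ x)
  le_trans p q r hpq hqr := by
    rcases p with ⟨yp | xp⟩ <;> rcases q with ⟨yq | xq⟩ <;> rcases r with ⟨yr | xr⟩
    · exact (le_trans (hpq : yp ≤ yq) (hqr : yq ≤ yr) : yp ≤ yr)
    · obtain ⟨y', h1, h2⟩ := (hqr : ∃ y', yq ≤ y' ∧ σ y' ≤ (xr : β))
      exact (⟨y', le_trans (hpq : yp ≤ yq) h1, h2⟩ : ∃ y', yp ≤ y' ∧ σ y' ≤ (xr : β))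
    · exact (hqr : False).elim
    · obtain ⟨y', h1, h2⟩ := (hpq : ∃ y', yp ≤ y' ∧ σ y' ≤ (xq : β))
      exact (⟨y', h1, le_trans h2 (hqr : (xq : β) ≤ (xr : β))⟩ :
        ∃ y', yp ≤ y' ∧ σ y' ≤ (xr : β))
    · exact (hpq : False).elim
    · exact (hpq : False).elim
    · exact (hqr : False).elim
    · exact (le_trans (hpq : xp ≤ xq) (hqr : xq ≤ xr) : xp ≤ xr)
  le_antisymm p q hpq hqp := by
    rcases p with ⟨yp | xp⟩ <;> rcases q with ⟨yq | xq⟩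
    · have h : yp = yq := le_antisymm (hpq : yp ≤ yq) (hqp : yq ≤ yp)
      subst h; rfl
    · exact (hqp : False).elim
    · exact (hpq : False).elim
    · have h : xp = xq := le_antisymm (hpq : xp ≤ xq) (hqp : xq ≤ xp)
      subst h; rfl

/-- The inclusion of `Π` into the extension. -/
def inclDom (y : α) : ExtP σ G := ⟨.inl y⟩

/-- The inclusion of `B ∖ Γ` into the extension. -/
def inclCompl (x : {x : β // x ∉ G}) : ExtP σ G := ⟨.inr x⟩

/-- The extension `σ̃ : Π̃ → B` of `σ`: it is `σ` on `Π` and the identity on `B ∖ Γ`. -/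
def extMap (σ : α → β) (G : Set β) (p : ExtP σ G) : β :=
  match p.elt with
  | .inl y => σ y
  | .inr x => (x : β)

def equivSum : ExtP σ G ≃ α ⊕ {x : β // x ∉ G} where
  toFun := elt
  invFun := mk
  left_inv _ := rfl
  right_inv _ := rfl

instance [Finite α] [Finite β] : Finite (ExtP σ G) := by
  have := Fintype.ofFinite α
  have := Fintype.ofFinite β
  exact Finite.of_equiv _ (equivSum (σ := σ) (G := G)).symm

end ExtP

/-!
The rank function of `Π̃` is `ρ_Π` on `Π` and `ρ_B` on `B ∖ Γ`: it vanishes at `0̂` and goes up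
by one along every cover relation. The only nontrivial covers are `y ⋖ x` with `y ∈ Π`, `x ∉ Γ`;
there the element `w ⋖ x` of `B` above `σ y` lies in `Γ`, and strong surjectivity of `σ` lifts it to
`y` itself, so `ρ x = ρ y + 1`. A finite poset carrying such a rank function, whose maximal
elements all have rank `n`, is graded of rank `n`.

Knowing the ranks, `σ̃` inherits the axioms of a strong formal subdivision from `σ` over `Γ` and
is the identity over `B ∖ Γ`. An interval `[s, t]` of `Π̃` with `t ∈ Π` is an interval of `Π`.
If `t ∉ Γ`, then `[s, t] = {q ≥ s | σ̃ q ≤ t}`, so summing `(-1) ^ ρ` over the fibres of `σ̃`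
turns it into the alternating sum over the interval `[σ̃ s, t]` of the Eulerian poset `B`.
-/

open Order

section Chains

variable {P : Type} [PartialOrder P]

def IsMaxChainIn (S : Set P) (c : Finset P) : Prop :=
  Maximal (fun t : Finset P => (t : Set P) ⊆ S ∧ IsChain (· ≤ ·) (t : Set P)) c

lemma isGradedSetOfRank_iff {S : Set P} {n : ℕ} :
    IsGradedSetOfRank S n ↔ ∀ c, IsMaxChainIn S c → c.card = n + 1 := by
  simp only [IsGradedSetOfRank, IsMaxChainIn, maximal_iff]
  exact ⟨fun h c hc => h c hc.1.1 hc.1.2 fun t hS ht hct => hc.2 ⟨hS, ht⟩ hct,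
    fun h c hS hc hmax => h c ⟨⟨hS, hc⟩, fun t ht hct => hmax t ht.1 ht.2 hct⟩⟩

lemma IsMaxChainIn.mem_of_forall {S : Set P} {c : Finset P} (hc : IsMaxChainIn S c) {z : P}
    (hz : z ∈ S) (hcomp : ∀ w ∈ c, z ≤ w ∨ w ≤ z) : z ∈ c := by
  have h := hc.eq_of_le (y := insert z c) ⟨?_, ?_⟩ (Finset.subset_insert z c)
  · exact h ▸ Finset.mem_insert_self z c
  · rw [Finset.coe_insert]
    exact Set.insert_subset hz hc.prop.1
  · rw [Finset.coe_insert]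
    exact hc.prop.2.insert fun w hw _ => hcomp w hw

lemma IsMaxChainIn.self_mem_Iic {x : P} {c : Finset P} (hc : IsMaxChainIn (Set.Iic x) c) :
    x ∈ c :=
  hc.mem_of_forall le_rfl fun _ hw => .inr (hc.prop.1 hw)

lemma IsMaxChainIn.self_mem_Ici {x : P} {c : Finset P} (hc : IsMaxChainIn (Set.Ici x) c) :
    x ∈ c :=
  hc.mem_of_forall le_rfl fun _ hw => .inl (hc.prop.1 hw)

lemma IsMaxChainIn.union_Iic_Ici {x : P} {c d : Finset P} (hc : IsMaxChainIn (Set.Iic x) c)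
    (hd : IsMaxChainIn (Set.Ici x) d) : IsMaxChainIn Set.univ (c ∪ d) := by
  refine ⟨⟨Set.subset_univ _, ?_⟩, fun t ht hct w hw => ?_⟩
  · rw [Finset.coe_union, isChain_union]
    exact ⟨hc.prop.2, hd.prop.2, fun a ha b hb _ => .inl ((hc.prop.1 ha).trans (hd.prop.1 hb))⟩
  · have hcomp : ∀ v ∈ c ∪ d, w ≤ v ∨ v ≤ w := fun v hv => IsChain.total ht.2 hw (hct hv)
    rcases hcomp x (Finset.mem_union_left d hc.self_mem_Iic) with hwx | hxw
    · exact Finset.mem_union_left d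
        (hc.mem_of_forall hwx fun v hv => hcomp v (Finset.mem_union_left d hv))
    · exact Finset.mem_union_right c
        (hd.mem_of_forall hxw fun v hv => hcomp v (Finset.mem_union_right c hv))

lemma exists_isGreatest_of_isChain {c : Finset P} (hc : IsChain (· ≤ ·) (c : Set P))
    (hne : c.Nonempty) : ∃ t, IsGreatest (c : Set P) t := by
  obtain ⟨t, ht⟩ := c.exists_maximal hne
  exact ⟨t, ht.prop, fun w hw => (hc.total hw ht.prop).elim id (ht.le_of_ge hw)⟩

lemma exists_isMaxChainIn [Finite P] {S : Set P} {c : Finset P} (hS : (c : Set P) ⊆ S)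
    (hc : IsChain (· ≤ ·) (c : Set P)) : ∃ t, c ⊆ t ∧ IsMaxChainIn S t :=
  Finite.exists_le_maximal
    (p := fun t : Finset P => (t : Set P) ⊆ S ∧ IsChain (· ≤ ·) (t : Set P)) ⟨hS, hc⟩

end Chains

section Height

variable {P Q : Type} [PartialOrder P] [PartialOrder Q]

lemma card_le_height_of_isChain {s : Finset P} (hs : IsChain (· ≤ ·) (s : Set P)) {x : P}
    (hx : ∀ w ∈ s, w < x) : (s.card : ℕ∞) ≤ height x := by
  induction h : s.card generalizing s x with
  | zero => simp
  | succ k ih =>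
    obtain ⟨t, hts, ht⟩ := exists_isGreatest_of_isChain hs (Finset.card_pos.1 (by omega))
    have hk : (k : ℕ∞) ≤ height t := by
      refine ih (hs.mono (Finset.coe_subset.2 (s.erase_subset t))) (fun w hw => ?_) ?_
      · exact (ht (Finset.mem_of_mem_erase hw)).lt_of_ne (Finset.ne_of_mem_erase hw)
      · rw [Finset.card_erase_of_mem hts, h, Nat.add_sub_cancel]
    calc ((k + 1 : ℕ) : ℕ∞) = k + 1 := Nat.cast_succ k
      _ ≤ height t + 1 := by gcongr
      _ ≤ height x := height_add_one_le (hx t hts)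

lemma exists_chain_card_iff_le_height {x : P} {k : ℕ} :
    (∃ s : Finset P, IsChain (· ≤ ·) (s : Set P) ∧ (s : Set P) ⊆ Set.Iic x ∧ s.card = k + 1) ↔
      (k : ℕ∞) ≤ height x := by
  constructor
  · rintro ⟨s, hs, hsx, hcard⟩
    have h := card_le_height_of_isChain (hs.mono (Finset.coe_subset.2 (s.erase_subset x)))
      (x := x) fun w hw =>
        (hsx (Finset.mem_of_mem_erase hw)).lt_of_ne (Finset.ne_of_mem_erase hw)
    have := s.pred_card_le_card_erase (a := x)
    rw [hcard, Nat.add_sub_cancel] at this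
    exact le_trans (by exact_mod_cast this) h
  · intro hk
    obtain ⟨p, hlast, hlen⟩ := exists_series_of_le_height x hk
    refine ⟨Finset.univ.image p, ?_, ?_, ?_⟩
    · rw [Finset.coe_image, Finset.coe_univ, Set.image_univ]
      exact p.monotone.isChain_range
    · rw [Finset.coe_image, Finset.coe_univ, Set.image_univ, ← hlast]
      rintro _ ⟨i, rfl⟩
      exact p.monotone (Fin.le_last i)
    · rw [Finset.card_image_of_injective _ p.strictMono.injective, Finset.card_univ,
        Fintype.card_fin, hlen]

lemma rho_eq_height [Finite P] (x : P) : (rho x : ℕ∞) = height x := by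
  have hfin : height x ≠ ⊤ := by
    intro htop
    have := Fintype.ofFinite P
    obtain ⟨s, -, -, hs⟩ :=
      exists_chain_card_iff_le_height.2 (htop ▸ le_top (a := (Fintype.card P : ℕ∞)))
    have := s.card_le_univ
    omega
  obtain ⟨N, hN⟩ := ENat.ne_top_iff_exists.1 hfin
  have hset : {k : ℕ | ∃ s : Finset P, IsChain (· ≤ ·) (s : Set P) ∧ (s : Set P) ⊆ Set.Iic x ∧
      s.card = k + 1} = Set.Iic N := by
    ext k
    rw [Set.mem_ofPred_eq, exists_chain_card_iff_le_height, ← hN, Nat.cast_le, Set.mem_Iic]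
  rw [rho, hset, csSup_Iic, hN]

variable [Finite P]

lemma card_le_rho_add_one {x : P} {s : Finset P} (hs : IsChain (· ≤ ·) (s : Set P))
    (hsx : (s : Set P) ⊆ Set.Iic x) : s.card ≤ rho x + 1 := by
  rcases s.eq_empty_or_nonempty with rfl | hne
  · simp
  · obtain ⟨k, hk⟩ := Nat.exists_eq_succ_of_ne_zero hne.card_pos.ne'
    have := exists_chain_card_iff_le_height.1 ⟨s, hs, hsx, hk⟩
    rw [← rho_eq_height, Nat.cast_le] at this
    omega

lemma exists_isMaxChainIn_Iic_card_eq (x : P) :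
    ∃ c, IsMaxChainIn (Set.Iic x) c ∧ c.card = rho x + 1 := by
  obtain ⟨c, hc, hcx, hcard⟩ := exists_chain_card_iff_le_height.2 (rho_eq_height x).le
  refine ⟨c, ⟨⟨hcx, hc⟩, fun t ht hct => ?_⟩, hcard⟩
  exact (Finset.eq_of_subset_of_card_le hct (hcard ▸ card_le_rho_add_one ht.2 ht.1)).symm.le

lemma rho_mono : Monotone (rho : P → ℕ) := fun x y h => by
  have := height_mono h
  rwa [← rho_eq_height, ← rho_eq_height, Nat.cast_le] at this

lemma rho_lt_rho {x y : P} (h : x < y) : rho x < rho y := by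
  have := height_strictMono h (by rw [← rho_eq_height]; exact ENat.natCast_lt_top _)
  rwa [← rho_eq_height, ← rho_eq_height, Nat.cast_lt] at this

lemma rho_eq_zero_iff {x : P} : rho x = 0 ↔ IsMin x := by
  rw [← height_eq_zero, ← rho_eq_height, Nat.cast_eq_zero]

lemma rho_apply_of_isLowerSet_range [Finite Q] (e : P ↪o Q) (he : IsLowerSet (Set.range e))
    (x : P) : rho (e x) = rho x := by
  have := height_eq_of_strictMono e e.strictMono (fun a b hb => ?_) x
  · rwa [← rho_eq_height, ← rho_eq_height, Nat.cast_inj, eq_comm] at this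
  · obtain ⟨a', rfl⟩ := he hb.le ⟨a, rfl⟩
    exact ⟨a', e.lt_iff_lt.1 hb, rfl⟩

lemma rho_coe_of_isLowerSet [Finite Q] {S : Set Q} (hS : IsLowerSet S) (x : S) :
    rho (x : Q) = rho x :=
  rho_apply_of_isLowerSet_range (OrderEmbedding.subtype (· ∈ S)) (by simpa using hS) x

lemma rho_eq_of_covBy {r : P → ℕ} (hmin : ∀ x, IsMin x → r x = 0)
    (hcov : ∀ x y, x ⋖ y → r y = r x + 1) (x : P) : rho x = r x := by
  induction x using WellFoundedLT.induction with
  | _ x ih =>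
  by_cases hx : IsMin x
  · rw [rho_eq_zero_iff.2 hx, hmin x hx]
  obtain ⟨z, hzx⟩ := not_isMin_iff.1 hx
  obtain ⟨y, -, hyx⟩ := exists_le_covBy_of_lt hzx
  apply le_antisymm
  · rw [← Nat.cast_le (α := ℕ∞), rho_eq_height, height_le_coe_iff]
    intro w hwx
    obtain ⟨v, hwv, hvx⟩ := exists_le_covBy_of_lt hwx
    rw [← rho_eq_height, Nat.cast_lt]
    calc rho w ≤ rho v := rho_mono hwv
      _ = r v := ih v hvx.lt
      _ < r x := by rw [hcov v x hvx]; omega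
  · rw [hcov y x hyx, ← ih y hyx.lt]
    exact rho_lt_rho hyx.lt

end Height

section Graded

variable {P : Type} [PartialOrder P] [Finite P] {n : ℕ}

lemma IsGradedOfRank.card_eq_rho_add_one (hP : IsGradedOfRank P n) {x : P} {c : Finset P}
    (hc : IsMaxChainIn (Set.Iic x) c) : c.card = rho x + 1 := by
  obtain ⟨d, -, hd⟩ := exists_isMaxChainIn (S := Set.Ici x) (c := {x}) (by simp) (by simp)
  -- Gluing `d` on top of any maximal chain of `Iic x` gives a maximal chain of `P`, so all of
  -- them have as many elements as the longest one.
  have key : ∀ c', IsMaxChainIn (Set.Iic x) c' → c'.card + d.card = n + 2 := by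
    intro c' hc'
    have hinter : c' ∩ d = {x} := by
      ext w
      simp only [Finset.mem_inter, Finset.mem_singleton]
      refine ⟨fun h => le_antisymm (hc'.prop.1 h.1) (hd.prop.1 h.2), ?_⟩
      rintro rfl
      exact ⟨hc'.self_mem_Iic, hd.self_mem_Ici⟩
    have := Finset.card_union_add_card_inter c' d
    rw [isGradedSetOfRank_iff.1 hP _ (hc'.union_Iic_Ici hd), hinter,
      Finset.card_singleton] at this
    omega
  obtain ⟨c₀, hc₀, hc₀card⟩ := exists_isMaxChainIn_Iic_card_eq x
  have := key c hc
  have := key c₀ hc₀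
  omega

lemma IsGradedOfRank.rho_eq_add_one_of_covBy (hP : IsGradedOfRank P n) {x y : P} (h : x ⋖ y) :
    rho y = rho x + 1 := by
  obtain ⟨c, hc, hcard⟩ := exists_isMaxChainIn_Iic_card_eq x
  have hyc : y ∉ c := fun hy => h.lt.not_ge (hc.prop.1 hy)
  have hmax : IsMaxChainIn (Set.Iic y) (insert y c) := by
    refine ⟨⟨?_, ?_⟩, fun t ht hct w hw => ?_⟩
    · rw [Finset.coe_insert]
      exact Set.insert_subset le_rfl (hc.prop.1.trans (Set.Iic_subset_Iic.2 h.le))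
    · rw [Finset.coe_insert]
      exact hc.prop.2.insert fun v hv _ => .inr ((hc.prop.1 hv).trans h.le)
    rcases (ht.1 hw).eq_or_lt with rfl | hwy
    · exact Finset.mem_insert_self w c
    have hcomp : ∀ v ∈ c, w ≤ v ∨ v ≤ w :=
      fun v hv => IsChain.total ht.2 hw (hct (Finset.mem_insert_of_mem hv))
    rcases hcomp x hc.self_mem_Iic with hwx | hxw
    · exact Finset.mem_insert_of_mem (hc.mem_of_forall hwx hcomp)
    rcases hxw.eq_or_lt with rfl | hxw
    · exact Finset.mem_insert_of_mem hc.self_mem_Iic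
    · exact (h.2 hxw hwy).elim
  have := hP.card_eq_rho_add_one hmax
  rw [Finset.card_insert_of_notMem hyc, hcard] at this
  omega

lemma IsGradedOfRank.rho_eq_of_isMax (hP : IsGradedOfRank P n) {x : P} (hx : IsMax x) :
    rho x = n := by
  obtain ⟨c, hc, hcard⟩ := exists_isMaxChainIn_Iic_card_eq x
  have hmax : IsMaxChainIn Set.univ c := by
    refine ⟨⟨Set.subset_univ _, hc.prop.2⟩, fun t ht hct => hc.2 ⟨fun w hw => ?_, ht.2⟩ hct⟩
    exact (IsChain.total ht.2 hw (hct hc.self_mem_Iic)).elim id (@hx w)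
  have := isGradedSetOfRank_iff.1 hP c hmax
  omega

lemma IsMaxChainIn.card_eq_rho_add_one_of_covBy (hcov : ∀ x y : P, x ⋖ y → rho y = rho x + 1)
    {t : P} {c : Finset P} (hc : IsMaxChainIn (Set.Iic t) c) : c.card = rho t + 1 := by
  induction h : c.card generalizing c t with
  | zero => exact absurd h (Finset.card_pos.2 ⟨t, hc.self_mem_Iic⟩).ne'
  | succ k ih =>
    have hc'card : (c.erase t).card = k := by
      rw [Finset.card_erase_of_mem hc.self_mem_Iic, h, Nat.add_sub_cancel]
    have hlt : ∀ w ∈ c.erase t, w < t := fun w hw =>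
      (hc.prop.1 (Finset.mem_of_mem_erase hw)).lt_of_ne (Finset.ne_of_mem_erase hw)
    have hfill : ∀ w < t, (∀ v ∈ c.erase t, w ≤ v ∨ v ≤ w) → w ∈ c.erase t := by
      intro w hwt hw
      refine Finset.mem_erase.2 ⟨hwt.ne, hc.mem_of_forall hwt.le fun v hv => ?_⟩
      rcases eq_or_ne v t with rfl | hvt
      · exact .inl hwt.le
      · exact hw v (Finset.mem_erase.2 ⟨hvt, hv⟩)
    have hchain : IsChain (· ≤ ·) ((c.erase t : Finset P) : Set P) :=
      hc.prop.2.mono (Finset.coe_subset.2 (c.erase_subset t))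
    rcases (c.erase t).eq_empty_or_nonempty with hempty | hne
    · have hmin : IsMin t := fun w hwt => by
        rcases hwt.eq_or_lt with rfl | hwt
        · exact le_rfl
        · exact absurd (hfill w hwt (by simp [hempty])) (by simp [hempty])
      rw [rho_eq_zero_iff.2 hmin, ← hc'card, hempty, Finset.card_empty]
    obtain ⟨t', ht'mem, ht'⟩ := exists_isGreatest_of_isChain hchain hne
    have ht't : t' ⋖ t := ⟨hlt t' ht'mem, fun w ht'w hwt => ht'w.not_ge <|
      ht' (hfill w hwt fun v hv => .inr ((ht' hv).trans ht'w.le))⟩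
    have hc' : IsMaxChainIn (Set.Iic t') (c.erase t) :=
      ⟨⟨ht', hchain⟩, fun s hs hcs w hw => hfill w ((hs.1 hw).trans_lt ht't.lt)
        fun v hv => IsChain.total hs.2 hw (hcs hv)⟩
    rw [hcov t' t ht't, ih hc' hc'card]

lemma isGradedOfRank_of_covBy [Nonempty P] (hcov : ∀ x y : P, x ⋖ y → rho y = rho x + 1)
    (hmax : ∀ x : P, IsMax x → rho x = n) : IsGradedOfRank P n := by
  refine isGradedSetOfRank_iff.2 fun c hc => ?_
  obtain ⟨z⟩ := ‹Nonempty P›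
  rcases c.eq_empty_or_nonempty with rfl | hne
  · exact absurd (hc.mem_of_forall (Set.mem_univ z) (by simp)) (Finset.notMem_empty z)
  obtain ⟨t, htc, ht⟩ := exists_isGreatest_of_isChain hc.prop.2 hne
  have htmax : IsMax t := fun b htb =>
    ht (hc.mem_of_forall (Set.mem_univ b) fun v hv => .inr ((ht hv).trans htb))
  have hc' : IsMaxChainIn (Set.Iic t) c :=
    ⟨⟨ht, hc.prop.2⟩, fun s hs hcs => hc.2 ⟨Set.subset_univ _, hs.2⟩ hcs⟩
  rw [hc'.card_eq_rho_add_one_of_covBy hcov, hmax t htmax]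

end Graded

section Euler

lemma ncard_even_eq_ncard_odd_iff {ι : Type*} {S : Set ι} (hS : S.Finite) (f : ι → ℕ) :
    {y ∈ S | Even (f y)}.ncard = {y ∈ S | Odd (f y)}.ncard ↔
      ∑ᶠ y ∈ S, (-1 : ℤ) ^ f y = 0 := by
  have hsplit : S = {y ∈ S | Even (f y)} ∪ {y ∈ S | Odd (f y)} := by
    ext y
    simp only [Set.mem_union, Set.mem_ofPred_eq, ← and_or_left, Nat.even_or_odd, and_true]
  have hdisj : Disjoint {y ∈ S | Even (f y)} {y ∈ S | Odd (f y)} :=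
    Set.disjoint_left.2 fun y h h' => Nat.not_even_iff_odd.2 h'.2 h.2
  have hsum : ∑ᶠ y ∈ S, (-1 : ℤ) ^ f y =
      {y ∈ S | Even (f y)}.ncard - {y ∈ S | Odd (f y)}.ncard := by
    conv_lhs => rw [hsplit]
    have hfin : ∀ p : ι → Prop, {y ∈ S | p y}.Finite := fun p => hS.subset (Set.sep_subset _ _)
    rw [finsum_mem_union hdisj (hfin _) (hfin _),
      finsum_mem_congr (g := fun _ => 1) rfl fun y hy => hy.2.neg_one_pow,
      finsum_mem_congr (s := {y ∈ S | Odd (f y)}) (g := fun _ => -1) rfl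
        fun y hy => hy.2.neg_one_pow, finsum_mem_neg_distrib _ (hfin _), sub_eq_add_neg]
    simp only [← Nat.cast_one (R := ℤ), ← Nat.cast_finsum_mem (hfin _), finsum_one]
  rw [hsum, sub_eq_zero, Nat.cast_inj]

variable {P Q : Type} [PartialOrder P] [PartialOrder Q] [Finite P]

lemma balancedIntervalsIn_univ_iff : BalancedIntervalsIn (Set.univ : Set P) ↔
    ∀ s t : P, s < t → ∑ᶠ q ∈ Set.Icc s t, (-1 : ℤ) ^ rho q = 0 := by
  simp only [BalancedIntervalsIn, Set.mem_univ, true_implies,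
    ncard_even_eq_ncard_odd_iff (Set.toFinite _)]

lemma finsum_Icc_apply_of_isLowerSet_range [Finite Q] (e : P ↪o Q)
    (he : IsLowerSet (Set.range e)) (a b : P) : ∑ᶠ q ∈ Set.Icc (e a) (e b), (-1 : ℤ) ^ rho q =
      ∑ᶠ p ∈ Set.Icc a b, (-1 : ℤ) ^ rho p := by
  rw [← e.image_Icc he.ordConnected, finsum_mem_image e.injective.injOn]
  exact finsum_mem_congr rfl fun p _ => by rw [rho_apply_of_isLowerSet_range e he]

lemma IsSFS.finsum_Icc [Finite Q] {φ : P → Q} (hφ : IsSFS φ) {s t : P}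
    (ht : ∀ q, q ≤ t ↔ φ q ≤ φ t) : ∑ᶠ q ∈ Set.Icc s t, (-1 : ℤ) ^ rho q =
      ∑ᶠ w ∈ Set.Icc (φ s) (φ t), (-1 : ℤ) ^ rho w := by
  have hIcc : Set.Icc s t = ⋃ w ∈ Set.Icc (φ s) (φ t), {q | φ q = w ∧ s ≤ q} := by
    ext q
    simp only [Set.mem_Icc, Set.mem_iUnion, Set.mem_ofPred_eq, exists_prop, ht]
    constructor
    · rintro ⟨hsq, hqt⟩
      exact ⟨φ q, ⟨hφ.1 hsq, hqt⟩, rfl, hsq⟩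
    · rintro ⟨w, hw, rfl, hsq⟩
      exact ⟨hsq, hw.2⟩
  rw [hIcc, finsum_mem_biUnion ?_ (Set.toFinite _) fun _ _ => Set.toFinite _]
  · exact finsum_mem_congr rfl fun w hw => hφ.2.2.2.2 s w hw.1
  · exact fun w _ w' _ hne => Set.disjoint_left.2 fun q h h' => hne (h.1 ▸ h'.1)

end Euler

section SFS

variable [PartialOrder α] [PartialOrder β] {G : Set β} {σ : α → G}

lemma IsSFS.monotone_coe (hσ : IsSFS σ) : Monotone fun y => (σ y : β) :=
  fun _ _ h => hσ.1 h

lemma IsSFS.coe_apply_bot [OrderBot α] [OrderBot β] (hσ : IsSFS σ) (hG : IsLowerSet G) :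
    (σ ⊥ : β) = ⊥ := by
  obtain ⟨y, hy⟩ := hσ.2.2.1 ⟨⊥, hG bot_le (σ ⊥).2⟩
  exact le_bot_iff.1 (hσ.monotone_coe bot_le |>.trans_eq (congrArg Subtype.val hy))

end SFS

namespace ExtP

section Basic

variable {f : α → β} {G : Set β}

@[elab_as_elim]
theorem ind {motive : ExtP f G → Prop} (dom : ∀ y, motive (inclDom y))
    (compl : ∀ x, motive (inclCompl x)) (p : ExtP f G) : motive p := by
  rcases p with ⟨y | x⟩
  exacts [dom y, compl x]

@[simp]
lemma inclDom_ne_inclCompl {y : α} {x : {x // x ∉ G}} : (inclDom y : ExtP f G) ≠ inclCompl x :=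
  fun h => Sum.inl_ne_inr (congrArg elt h)

@[simp]
lemma extMap_inclDom (y : α) : extMap f G (inclDom y) = f y := rfl

@[simp]
lemma extMap_inclCompl (x : {x // x ∉ G}) : extMap f G (inclCompl x) = x := rfl

lemma exists_eq_inclDom [LE β] (hG : IsLowerSet G) {p : ExtP f G} {w : β}
    (hpw : extMap f G p ≤ w) (hw : w ∈ G) : ∃ y, p = inclDom y := by
  induction p using ind with
  | dom y => exact ⟨y, rfl⟩
  | compl x => exact (x.2 (hG hpw hw)).elim

end Basic

section Order

variable [PartialOrder α] [PartialOrder β] {f : α → β} {G : Set β}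

@[simp]
lemma inclDom_le_inclDom {y y' : α} : (inclDom y : ExtP f G) ≤ inclDom y' ↔ y ≤ y' := Iff.rfl

@[simp]
lemma inclCompl_le_inclCompl {x x' : {x // x ∉ G}} :
    (inclCompl x : ExtP f G) ≤ inclCompl x' ↔ x ≤ x' := Iff.rfl

@[simp]
lemma not_inclCompl_le_inclDom {x : {x // x ∉ G}} {y : α} :
    ¬(inclCompl x : ExtP f G) ≤ inclDom y :=
  id

lemma inclDom_le_inclCompl (hf : Monotone f) {y : α} {x : {x // x ∉ G}} :
    (inclDom y : ExtP f G) ≤ inclCompl x ↔ f y ≤ x :=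
  ⟨fun ⟨_, hyy', hy'x⟩ => (hf hyy').trans hy'x, fun h => ⟨y, le_rfl, h⟩⟩

lemma inclDom_lt_inclCompl (hf : Monotone f) {y : α} {x : {x // x ∉ G}} :
    (inclDom y : ExtP f G) < inclCompl x ↔ f y ≤ x := by
  rw [lt_iff_le_not_ge, inclDom_le_inclCompl hf, and_iff_left not_inclCompl_le_inclDom]

def inclDomEmb : α ↪o ExtP f G := OrderEmbedding.ofMapLEIff inclDom fun _ _ => Iff.rfl

def inclComplEmb : {x // x ∉ G} ↪o ExtP f G :=
  OrderEmbedding.ofMapLEIff inclCompl fun _ _ => Iff.rfl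

@[simp]
lemma inclDom_lt_inclDom {y y' : α} : (inclDom y : ExtP f G) < inclDom y' ↔ y < y' :=
  (inclDomEmb (f := f) (G := G)).lt_iff_lt

@[simp]
lemma inclCompl_lt_inclCompl {x x' : {x // x ∉ G}} :
    (inclCompl x : ExtP f G) < inclCompl x' ↔ x < x' :=
  (inclComplEmb (f := f)).lt_iff_lt

lemma inclDom_injective : Function.Injective (inclDom : α → ExtP f G) :=
  (inclDomEmb (f := f) (G := G)).injective

lemma inclCompl_injective : Function.Injective (inclCompl : {x // x ∉ G} → ExtP f G) :=
  (inclComplEmb (f := f)).injective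

lemma isLowerSet_range_inclDomEmb : IsLowerSet (Set.range (inclDomEmb : α ↪o ExtP f G)) := by
  rintro _ p hp ⟨y, rfl⟩
  induction p using ind with
  | dom y' => exact ⟨y', rfl⟩
  | compl x => exact (not_inclCompl_le_inclDom hp).elim

lemma monotone_extMap (hf : Monotone f) : Monotone (extMap f G) := by
  intro p q hpq
  induction p using ind <;> induction q using ind
  · exact hf hpq
  · exact (inclDom_le_inclCompl hf).1 hpq
  · exact (not_inclCompl_le_inclDom hpq).elim
  · exact hpq

lemma le_inclCompl_iff (hf : Monotone f) {p : ExtP f G} {x : {x // x ∉ G}} :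
    p ≤ inclCompl x ↔ extMap f G p ≤ x := by
  induction p using ind
  · exact inclDom_le_inclCompl hf
  · exact Iff.rfl

def rank (p : ExtP f G) : ℕ :=
  match p.elt with
  | .inl y => rho y
  | .inr x => rho (x : β)

@[simp]
lemma rank_inclDom (y : α) : rank (inclDom y : ExtP f G) = rho y := rfl

@[simp]
lemma rank_inclCompl (x : {x // x ∉ G}) : rank (inclCompl x : ExtP f G) = rho (x : β) := rfl

end Order

section Subdivision

variable [PartialOrder α] [PartialOrder β] {G : Set β} {σ : α → G}

local notation "Ext" => ExtP (fun y => (σ y : β)) G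

lemma extMap_lt_of_lt_inclCompl (hσ : IsSFS σ) {p : Ext} {x : {x // x ∉ G}}
    (hp : p < inclCompl x) : extMap _ G p < x := by
  induction p using ind with
  | dom y =>
    exact ((inclDom_le_inclCompl hσ.monotone_coe).1 hp.le).lt_of_ne fun h => x.2 (h ▸ (σ y).2)
  | compl v => exact Subtype.coe_lt_coe.2 (inclCompl_lt_inclCompl.1 hp)

lemma inclDom_bot_le [OrderBot α] [OrderBot β] (hσ : IsSFS σ) (hG : IsLowerSet G) (p : Ext) :
    inclDom ⊥ ≤ p := by
  induction p using ind with
  | dom y => exact bot_le (a := y)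
  | compl x => exact (inclDom_le_inclCompl hσ.monotone_coe).2 (hσ.coe_apply_bot hG ▸ bot_le)

lemma rank_inclCompl_of_covBy [Finite β] (hσ : IsSFS σ) (hG : IsLowerSet G) {n : ℕ}
    (hB : IsGradedOfRank β n) {y : α} {x : {x // x ∉ G}}
    (h : (inclDom y : Ext) ⋖ inclCompl x) : rho (x : β) = rho y + 1 := by
  have hlt : (σ y : β) < x := extMap_lt_of_lt_inclCompl hσ h.lt
  obtain ⟨w, hyw, hwx⟩ := exists_le_covBy_of_lt hlt
  by_cases hw : w ∈ G
  · obtain ⟨y', hyy', hσy', hρ⟩ := hσ.2.2.2.1 y ⟨w, hw⟩ hyw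
    have hy' : y' = y := by
      by_contra hne
      refine h.2 (inclDom_lt_inclDom.2 (lt_of_le_of_ne hyy' (Ne.symm hne))) ?_
      rw [inclDom_lt_inclCompl hσ.monotone_coe, hσy']
      exact hwx.le
    rw [hB.rho_eq_add_one_of_covBy hwx, ← hy', hρ, ← rho_coe_of_isLowerSet hG]
  · have hyw' : (inclDom y : Ext) < inclCompl ⟨w, hw⟩ :=
      (inclDom_lt_inclCompl hσ.monotone_coe).2 hyw
    exact (h.2 hyw' (inclCompl_lt_inclCompl.2 hwx.lt)).elim

lemma rank_eq_zero_of_isMin [Finite α] [OrderBot α] [OrderBot β] (hσ : IsSFS σ)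
    (hG : IsLowerSet G) {p : Ext} (hp : IsMin p) : rank p = 0 := by
  have hle := hp (inclDom_bot_le hσ hG p)
  induction p using ind with
  | dom y => exact rho_eq_zero_iff.2 (le_bot_iff.1 hle ▸ isMin_bot)
  | compl x => exact (not_inclCompl_le_inclDom hle).elim

variable [Finite α] [Finite β] {m n : ℕ}

lemma rank_eq_add_one_of_covBy (hσ : IsSFS σ) (hG : IsLowerSet G)
    (hα : IsGradedOfRank α m) (hB : IsGradedOfRank β n) {p q : Ext} (h : p ⋖ q) :
    rank q = rank p + 1 := by
  induction p using ind with
  | dom y =>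
    induction q using ind with
    | dom y' => exact hα.rho_eq_add_one_of_covBy (CovBy.of_image inclDomEmb h)
    | compl x => exact rank_inclCompl_of_covBy hσ hG hB h
  | compl x =>
    induction q using ind with
    | dom y => exact (not_inclCompl_le_inclDom h.le).elim
    | compl x' =>
      have hxx' : x ⋖ x' := CovBy.of_image inclComplEmb h
      refine hB.rho_eq_add_one_of_covBy (hxx'.image (OrderEmbedding.subtype _) ?_)
      simpa [← Set.compl_def] using (isUpperSet_compl.2 hG).ordConnected

variable [OrderBot α] [OrderBot β]

lemma rho_eq_rank (hσ : IsSFS σ) (hG : IsLowerSet G) (hα : IsGradedOfRank α m)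
    (hB : IsGradedOfRank β n) (p : Ext) : rho p = rank p :=
  rho_eq_of_covBy (fun _ hp => rank_eq_zero_of_isMin hσ hG hp)
    (fun _ _ h => rank_eq_add_one_of_covBy hσ hG hα hB h) p

lemma rho_eq_of_isMax [OrderTop β] (hσ : IsSFS σ) (hG : IsLowerSet G)
    (hα : IsGradedOfRank α m) (hB : IsGradedOfRank β n) {p : Ext} (hp : IsMax p) :
    rho p = n := by
  rw [rho_eq_rank hσ hG hα hB]
  induction p using ind with
  | dom y =>
    -- If `⊤ ∈ Γ`, strong surjectivity lifts `⊤` to an element above `y`, which must be `y`.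
    by_cases htop : (⊤ : β) ∈ G
    · obtain ⟨y', hyy', -, hρ⟩ := hσ.2.2.2.1 y ⟨⊤, htop⟩ le_top
      have hy' : y' = y := le_antisymm (hp (inclDom_le_inclDom.2 hyy')) hyy'
      rw [rank_inclDom, ← hy', hρ, ← rho_coe_of_isLowerSet hG, hB.rho_eq_of_isMax isMax_top]
    · have hlt : (inclDom y : Ext) ≤ inclCompl ⟨⊤, htop⟩ :=
        (inclDom_le_inclCompl hσ.monotone_coe).2 le_top
      exact (not_inclCompl_le_inclDom (hp hlt)).elim
  | compl x =>
    refine hB.rho_eq_of_isMax fun b hxb => ?_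
    have hb : b ∉ G := fun hb => x.2 (hG hxb hb)
    exact inclCompl_le_inclCompl.1 (hp (inclCompl_le_inclCompl.2 (show x ≤ ⟨b, hb⟩ from hxb)))

lemma isGradedOfRank [OrderTop β] (hσ : IsSFS σ) (hG : IsLowerSet G)
    (hα : IsGradedOfRank α m) (hB : IsGradedOfRank β n) : IsGradedOfRank Ext n :=
  haveI : Nonempty Ext := ⟨inclDom ⊥⟩
  isGradedOfRank_of_covBy
    (fun p q h => by
      rw [rho_eq_rank hσ hG hα hB, rho_eq_rank hσ hG hα hB]
      exact rank_eq_add_one_of_covBy hσ hG hα hB h)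
    (fun _ hp => rho_eq_of_isMax hσ hG hα hB hp)

lemma finsum_fiber_extMap (hσ : IsSFS σ) (hG : IsLowerSet G) (hα : IsGradedOfRank α m)
    (hB : IsGradedOfRank β n) {p : Ext} {w : β} (hpw : extMap _ G p ≤ w) :
    ∑ᶠ q ∈ {q | extMap _ G q = w ∧ p ≤ q}, (-1 : ℤ) ^ rho q = (-1) ^ rho w := by
  have hrho := rho_eq_rank hσ hG hα hB
  by_cases hw : w ∈ G
  · obtain ⟨a, rfl⟩ := exists_eq_inclDom hG hpw hw
    have hfib : {q : Ext | extMap _ G q = w ∧ inclDom a ≤ q} =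
        inclDom '' {y | σ y = ⟨w, hw⟩ ∧ a ≤ y} := by
      ext q
      induction q using ind with
      | dom y => simp [Subtype.ext_iff, inclDom_injective.eq_iff]
      | compl x =>
        simp only [extMap_inclCompl, Set.mem_ofPred_eq, Set.mem_image, inclDom_ne_inclCompl,
          and_false, exists_false, iff_false, not_and]
        rintro rfl
        exact absurd hw x.2
    rw [hfib, finsum_mem_image inclDom_injective.injOn,
      show rho w = rho (⟨w, hw⟩ : G) from rho_coe_of_isLowerSet hG ⟨w, hw⟩,
      ← hσ.2.2.2.2 a ⟨w, hw⟩ hpw]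
    exact finsum_mem_congr rfl fun y _ => by rw [hrho, rank_inclDom]
  · have hfib : {q : Ext | extMap _ G q = w ∧ p ≤ q} = {inclCompl ⟨w, hw⟩} := by
      ext q
      induction q using ind with
      | dom y => simpa using fun (h : (σ y : β) = w) _ => hw (h ▸ (σ y).2)
      | compl x =>
        rw [Set.mem_singleton_iff, inclCompl_injective.eq_iff, Subtype.ext_iff]
        exact ⟨And.left, fun h => ⟨h, (le_inclCompl_iff hσ.monotone_coe).2 (h ▸ hpw)⟩⟩
    rw [hfib, finsum_mem_singleton, hrho, rank_inclCompl]

lemma isSFS_extMap (hσ : IsSFS σ) (hG : IsLowerSet G) (hα : IsGradedOfRank α m)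
    (hB : IsGradedOfRank β n) : IsSFS (extMap (fun y => (σ y : β)) G) := by
  have hrho := rho_eq_rank hσ hG hα hB
  refine ⟨monotone_extMap hσ.monotone_coe, fun p => ?_, fun w => ?_, fun p w hpw => ?_,
    fun p w hpw => finsum_fiber_extMap hσ hG hα hB hpw⟩
  · rw [hrho]
    induction p using ind with
    | dom y => exact (hσ.2.1 y).trans_eq (rho_coe_of_isLowerSet hG _).symm
    | compl x => exact le_rfl
  · by_cases hw : w ∈ G
    · obtain ⟨y, hy⟩ := hσ.2.2.1 ⟨w, hw⟩
      exact ⟨inclDom y, congrArg Subtype.val hy⟩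
    · exact ⟨inclCompl ⟨w, hw⟩, rfl⟩
  · by_cases hw : w ∈ G
    · obtain ⟨a, rfl⟩ := exists_eq_inclDom hG hpw hw
      obtain ⟨y', hay', hσy', hρ⟩ := hσ.2.2.2.1 a ⟨w, hw⟩ hpw
      refine ⟨inclDom y', hay', congrArg Subtype.val hσy', ?_⟩
      rw [hrho, rank_inclDom, hρ, ← rho_coe_of_isLowerSet hG]
    · refine ⟨inclCompl ⟨w, hw⟩, (le_inclCompl_iff hσ.monotone_coe).2 hpw, rfl, ?_⟩
      rw [hrho, rank_inclCompl]

lemma balancedIntervalsIn_univ (hσ : IsSFS σ) (hG : IsLowerSet G) (hα : IsGradedOfRank α m)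
    (hB : IsGradedOfRank β n) (hαbal : BalancedIntervalsIn (Set.univ : Set α))
    (hBbal : BalancedIntervalsIn (Set.univ : Set β)) :
    BalancedIntervalsIn (Set.univ : Set Ext) := by
  rw [balancedIntervalsIn_univ_iff] at hαbal hBbal ⊢
  intro s t hst
  induction t using ind with
  | dom b =>
    obtain ⟨a, rfl⟩ := isLowerSet_range_inclDomEmb hst.le ⟨b, rfl⟩
    exact (finsum_Icc_apply_of_isLowerSet_range _ isLowerSet_range_inclDomEmb a b).trans
      (hαbal a b (inclDomEmb.lt_iff_lt.1 hst))
  | compl x =>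
    rw [(isSFS_extMap hσ hG hα hB).finsum_Icc fun q => le_inclCompl_iff hσ.monotone_coe]
    exact hBbal _ _ (extMap_lt_of_lt_inclCompl hσ hst)

end Subdivision

end ExtP

theorem extension_isSFS_general
    (α β : Type) [PartialOrder α] [Finite α] [OrderBot α]
    [PartialOrder β] [Finite β] [OrderBot β] [OrderTop β] (n m : ℕ)
    (hB : IsEulerianOfRank β n)
    (G : Set β) (hG : IsLowerSet G)
    (hPi : IsLowerEulerianOfRank α m)
    (σ : α → G) (hσ : IsSFS σ) :
    IsLowerEulerianOfRank (ExtP (fun y => (σ y : β)) G) n ∧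
    IsSFS (ExtP.extMap (fun y => (σ y : β)) G) ∧
    (G ≠ Set.univ → IsEulerianOfRank (ExtP (fun y => (σ y : β)) G) n) := by
  obtain ⟨-, -, hBgr, hBbal⟩ := hB
  obtain ⟨-, hαgr, hαbal⟩ := hPi
  have hgr := ExtP.isGradedOfRank hσ hG hαgr hBgr
  have hbal := ExtP.balancedIntervalsIn_univ hσ hG hαgr hBgr hαbal hBbal
  have hbot : ∃ b : ExtP (fun y => (σ y : β)) G, ∀ p, b ≤ p :=
    ⟨ExtP.inclDom ⊥, ExtP.inclDom_bot_le hσ hG⟩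
  refine ⟨⟨hbot, hgr, hbal⟩, ExtP.isSFS_extMap hσ hG hαgr hBgr, fun hU => ⟨hbot, ?_, hgr, hbal⟩⟩
  have htop : (⊤ : β) ∉ G := fun h => hU (Set.eq_univ_of_forall fun _ => hG le_top h)
  exact ⟨ExtP.inclCompl ⟨⊤, htop⟩, fun p => (ExtP.le_inclCompl_iff hσ.monotone_coe).2 le_top⟩

/-- Let `σ : Π → Γ` be a strong formal subdivision of rank `0` between
lower Eulerian posets, where `Γ = G` is a lower order ideal in an Eulerian poset `B` of
rank `n`.  Then the extension `Π̃` of `Π` over `B` is lower Eulerian (of rank `n`) and the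
extension `σ̃ : Π̃ → B` is a strong formal subdivision; moreover if `Γ ⊊ B` then `Π̃`
is Eulerian. -/
theorem extension_isSFS
    (α β : Type) [PartialOrder α] [Finite α] [OrderBot α]
    [PartialOrder β] [Finite β] [OrderBot β] [OrderTop β] (n m : ℕ)
    (hB : IsEulerianOfRank β n)
    (G : Set β) (hG : IsLowerSet G) (hGle : IsLowerEulerianSetOfRank G m)
    (hPi : IsLowerEulerianOfRank α m)
    (σ : α → G) (hσ : IsSFS σ) :
    IsLowerEulerianOfRank (ExtP (fun y => (σ y : β)) G) n ∧
    IsSFS (ExtP.extMap (fun y => (σ y : β)) G) ∧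
    (G ≠ Set.univ → IsEulerianOfRank (ExtP (fun y => (σ y : β)) G) n) :=
  extension_isSFS_general α β n m hB G hG hPi σ hσ

end CDIndex
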